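/- arXiv:2601.12780 — 5 statements merged into one kernel-verified Lean document; each statement's English description precedes it below -/
import Mathlib

section
/- Let 1 ≤ k2 ≤ n2, n2 = m, 2 ≤ n1 ≤ m, and k1 = n1. Let g1 ∈ L^{n1} with wt_R(g1) = n1 and g2 ∈ L^{n2} with wt_R(g2) = n2, and set G1 = Moore(g1, k1) and G2 = Moore(g2, k2). Then the minimum rank distance of the row space of the Kronecker product G1 ⊗ G2 (a linear code of length n1·n2 and dimension k1·k2 over L) equals n2 − k2 + 1; that is, every nonzero codeword has rank weight at least n2 − k2 + 1, and some nonzero codeword has rank weight exactly n2 − k2 + 1. -/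
/-!
Row `j₁` of the codeword `x ᵥ* (moore q g₁ k₁ ⊗ₖ moore q g₂ k₂)` is `y ᵥ* moore q g₂ k₂` for
`y i₂ = ∑ i₁, x (i₁, i₂) * g₁ j₁ ^ q ^ i₁`, i.e. the linearized polynomial
`P_y z = ∑ i, y i * z ^ q ^ i` evaluated at the `g₂ j`. Since `P_y` is `K`-linear of degree at most
`q ^ (k₂ - 1)`, its kernel has at most `q ^ (k₂ - 1)` elements, so dimension at most `k₂ - 1`;
as the `g₂ j` span `L`, a nonzero row already spans a space of dimension at least `m - (k₂ - 1)`.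
Conversely, the square Moore matrix of the independent `g₁` is invertible, which gives the codeword
`e₀ ⊗ (b ᵥ* moore q g₂ k₂)`, where `P_b` vanishes on `g₂ 0, …, g₂ (k₂ - 2)`, so that its kernel has
dimension exactly `k₂ - 1`.
-/

open Matrix Kronecker

/-- Rank weight of a vector over the extension `L` of the base field `K`:
the `K`-dimension of the `K`-span of its entries. -/
noncomputable def rankWeight (K : Type*) {L : Type*} [Field K] [Field L] [Algebra K L]
    {ι : Type*} (v : ι → L) : ℕ :=
  Module.finrank K (Submodule.span K (Set.range v))

/-- The `k × n` Moore matrix of `g` with respect to `q`: entry `(i, j)` is `g j ^ q ^ i`. -/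
def moore (q : ℕ) {L : Type*} [Field L] {n : ℕ} (g : Fin n → L) (k : ℕ) :
    Matrix (Fin k) (Fin n) L :=
  Matrix.of fun i j => g j ^ q ^ (i : ℕ)

section Kronecker

variable {R l m n p : Type*} [CommSemiring R] [Fintype l] [Fintype n]

theorem Matrix.vecMul_kronecker_apply (x : l × n → R) (A : Matrix l m R) (B : Matrix n p R)
    (j₁ : m) (j₂ : p) :
    (x ᵥ* (A ⊗ₖ B)) (j₁, j₂) = ((fun i₂ => ((fun i₁ => x (i₁, i₂)) ᵥ* A) j₁) ᵥ* B) j₂ := by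
  simp only [vecMul, dotProduct, kroneckerMap_apply, Finset.sum_mul, Fintype.sum_prod_type]
  rw [Finset.sum_comm]
  exact Finset.sum_congr rfl fun _ _ => Finset.sum_congr rfl fun _ _ => by ring

theorem Matrix.vecMul_kronecker_mul (a : l → R) (b : n → R) (A : Matrix l m R)
    (B : Matrix n p R) :
    (fun i => a i.1 * b i.2) ᵥ* (A ⊗ₖ B) = fun j => (a ᵥ* A) j.1 * (b ᵥ* B) j.2 := by
  ext ⟨j₁, j₂⟩
  rw [vecMul_kronecker_apply]
  simp only [vecMul, dotProduct, Finset.sum_mul, Finset.mul_sum]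
  exact Finset.sum_congr rfl fun _ _ => Finset.sum_congr rfl fun _ _ => by ring

end Kronecker

section RankWeight

variable (K : Type*) {L ι κ : Type*} [Field K] [Field L] [Algebra K L]

@[simp] theorem rankWeight_zero : rankWeight K (0 : ι → L) = 0 := by
  rw [rankWeight, Submodule.span_eq_bot.mpr (by rintro _ ⟨_, rfl⟩; rfl), finrank_bot]

theorem rankWeight_comp_le [FiniteDimensional K L] (v : ι → L) (f : κ → ι) :
    rankWeight K (v ∘ f) ≤ rankWeight K v :=
  Submodule.finrank_mono (Submodule.span_mono (Set.range_comp_subset_range f v))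

theorem rankWeight_comp_linearMap {g : ι → L} (hg : Submodule.span K (Set.range g) = ⊤)
    (f : L →ₗ[K] L) : rankWeight K (f ∘ g) = Module.finrank K (LinearMap.range f) := by
  rw [rankWeight, Set.range_comp, Submodule.span_image, hg, Submodule.map_top]

theorem rankWeight_single_mul [DecidableEq ι] (i : ι) (v : κ → L) :
    rankWeight K (fun p : ι × κ => (Pi.single i 1 : ι → L) p.1 * v p.2) = rankWeight K v := by
  suffices h : Submodule.span K (Set.range fun p : ι × κ => (Pi.single i 1 : ι → L) p.1 * v p.2) =
      Submodule.span K (Set.range v) by rw [rankWeight, rankWeight, h]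
  refine le_antisymm (Submodule.span_le.mpr ?_) (Submodule.span_mono ?_)
  · rintro _ ⟨⟨i', j⟩, rfl⟩
    rcases eq_or_ne i' i with rfl | hi
    · simpa using Submodule.subset_span (R := K) (Set.mem_range_self j)
    · simp [Pi.single_eq_of_ne hi]
  · rintro _ ⟨j, rfl⟩
    exact ⟨(i, j), by simp⟩

theorem linearIndependent_of_rankWeight_eq {n : ℕ} {g : Fin n → L} (hg : rankWeight K g = n) :
    LinearIndependent K g :=
  linearIndependent_iff_card_eq_finrank_span.mpr <| by
    rw [Set.finrank, ← rankWeight, hg, Fintype.card_fin]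

end RankWeight

section Linearized

open Polynomial FiniteField

variable (K : Type*) {L : Type*} [Field K] [Fintype K] [Field L] [Algebra K L]

/-- The linearized polynomial `z ↦ ∑ i, x i * z ^ (#K) ^ i`, written with powers of the Frobenius
so that `K`-linearity comes for free. -/
noncomputable def linearizedMap {k : ℕ} (x : Fin k → L) : L →ₗ[K] L :=
  ∑ i, x i • (frobeniusAlgHom K L ^ (i : ℕ)).toLinearMap

variable {K}

theorem linearizedMap_apply {k : ℕ} (x : Fin k → L) (z : L) :
    linearizedMap K x z = ∑ i, x i * z ^ Fintype.card K ^ (i : ℕ) := by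
  simp [linearizedMap, coe_frobeniusAlgHom, pow_iterate]

theorem vecMul_moore {n k : ℕ} (y : Fin k → L) (g : Fin n → L) :
    y ᵥ* moore (Fintype.card K) g k = linearizedMap K y ∘ g := by
  ext j
  simp [vecMul, dotProduct, moore, linearizedMap_apply]

variable (K) in
theorem card_ker_linearizedMap_le [Finite L] {k : ℕ} {x : Fin k → L} (hx : x ≠ 0) :
    Nat.card (LinearMap.ker (linearizedMap K x)) ≤ Fintype.card K ^ (k - 1) := by
  classical
  have hq : 1 < Fintype.card K := Fintype.one_lt_card
  set P : L[X] := ∑ i, C (x i) * X ^ Fintype.card K ^ (i : ℕ)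
  obtain ⟨i₀, hi₀⟩ := Function.ne_iff.mp hx
  have hP : P ≠ 0 := fun h => hi₀ <| by
    simpa [P, finsetSum_coeff, coeff_C_mul_X_pow, (Nat.pow_right_injective hq).eq_iff,
      Fin.val_inj] using congr_arg (coeff · (Fintype.card K ^ (i₀ : ℕ))) h
  have hdeg : P.natDegree ≤ Fintype.card K ^ (k - 1) :=
    natDegree_sum_le_of_forall_le _ _ fun i _ => (natDegree_C_mul_X_pow_le _ _).trans
      (Nat.pow_le_pow_right hq.le (by omega))
  have hroots : (LinearMap.ker (linearizedMap K x) : Set L) ⊆ P.roots.toFinset := fun z hz => by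
    simpa [mem_roots hP, P, eval_finsetSum, linearizedMap_apply] using hz
  calc Nat.card (LinearMap.ker (linearizedMap K x))
      ≤ P.roots.toFinset.card := by
        rw [← Set.ncard_coe_finset, ← SetLike.coe_sort_coe, Nat.card_coe_set_eq]
        exact Set.ncard_le_ncard hroots
    _ ≤ P.natDegree := (Multiset.toFinset_card_le _).trans (card_roots' P)
    _ ≤ _ := hdeg

variable (K) in
theorem finrank_ker_linearizedMap_le [Finite L] {k : ℕ} {x : Fin k → L} (hx : x ≠ 0) :
    Module.finrank K (LinearMap.ker (linearizedMap K x)) ≤ k - 1 := by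
  have hcard := card_ker_linearizedMap_le K hx
  rw [Module.natCard_eq_pow_finrank (K := K), Nat.card_eq_fintype_card] at hcard
  exact (Nat.pow_le_pow_iff_right Fintype.one_lt_card).mp hcard

theorem span_le_ker_linearizedMap {n k : ℕ} {g : Fin n → L} {y : Fin k → L}
    (hy : y ᵥ* moore (Fintype.card K) g k = 0) :
    Submodule.span K (Set.range g) ≤ LinearMap.ker (linearizedMap K y) := by
  rw [Submodule.span_le]
  rintro _ ⟨j, rfl⟩
  exact congr_fun ((vecMul_moore y g).symm.trans hy) j

theorem rankWeight_vecMul_moore_add_finrank_ker [FiniteDimensional K L] {n k : ℕ} {g : Fin n → L}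
    (hg : Submodule.span K (Set.range g) = ⊤) (y : Fin k → L) :
    rankWeight K (y ᵥ* moore (Fintype.card K) g k) +
      Module.finrank K (LinearMap.ker (linearizedMap K y)) = Module.finrank K L := by
  rw [vecMul_moore, rankWeight_comp_linearMap K hg, LinearMap.finrank_range_add_finrank_ker]

theorem injective_vecMul_moore [Finite L] {n k : ℕ} {g : Fin n → L} (hg : k ≤ rankWeight K g) :
    Function.Injective (moore (Fintype.card K) g k).vecMul := by
  rw [← coe_vecMulLinear, injective_iff_map_eq_zero]
  intro y hy
  by_contra hy₀
  have hk : 0 < k := Fin.pos (Function.ne_iff.mp hy₀).choose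
  have hspan := Submodule.finrank_mono (span_le_ker_linearizedMap hy)
  have hker := finrank_ker_linearizedMap_le K hy₀
  rw [rankWeight] at hg
  omega

theorem isUnit_moore [Finite L] {n : ℕ} {g : Fin n → L} (hg : n ≤ rankWeight K g) :
    IsUnit (moore (Fintype.card K) g n) :=
  vecMul_injective_iff_isUnit.mp (injective_vecMul_moore hg)

theorem Matrix.exists_ne_zero_vecMul_eq_zero_of_card_lt {F m n : Type*} [Field F] [Fintype m]
    [Fintype n] (M : Matrix m n F) (h : Fintype.card n < Fintype.card m) :
    ∃ y ≠ 0, y ᵥ* M = 0 := by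
  obtain ⟨y, hy, hy₀⟩ := (Submodule.ne_bot_iff _).mp <|
    M.vecMulLinear.ker_ne_bot_of_finrank_lt (by simpa using h)
  exact ⟨y, hy₀, hy⟩

theorem sub_le_rankWeight_vecMul_moore [Finite L] {n k : ℕ} {g : Fin n → L}
    (hg : Submodule.span K (Set.range g) = ⊤) {y : Fin k → L} (hy : y ≠ 0) :
    Module.finrank K L - (k - 1) ≤ rankWeight K (y ᵥ* moore (Fintype.card K) g k) := by
  have := rankWeight_vecMul_moore_add_finrank_ker hg y
  have := finrank_ker_linearizedMap_le K hy
  omega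

theorem exists_rankWeight_vecMul_moore_eq [Finite L] {n k : ℕ} {g : Fin n → L}
    (hli : LinearIndependent K g) (hg : Submodule.span K (Set.range g) = ⊤) (hk : 1 ≤ k)
    (hkn : k ≤ n) :
    ∃ y, rankWeight K (y ᵥ* moore (Fintype.card K) g k) = Module.finrank K L - (k - 1) := by
  let g' := g ∘ Fin.castLE (show k - 1 ≤ n by omega)
  obtain ⟨y, hy₀, hy⟩ := (moore (Fintype.card K) g' k).exists_ne_zero_vecMul_eq_zero_of_card_lt
    (by simp only [Fintype.card_fin]; omega)
  have hg' : Module.finrank K (Submodule.span K (Set.range g')) = k - 1 := by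
    rw [finrank_span_eq_card (hli.comp _ (Fin.castLE_injective _)), Fintype.card_fin]
  have := Submodule.finrank_mono (span_le_ker_linearizedMap hy)
  have := finrank_ker_linearizedMap_le K hy₀
  have := rankWeight_vecMul_moore_add_finrank_ker hg y
  exact ⟨y, by omega⟩

end Linearized

section KroneckerMoore

variable {K L : Type*} [Field K] [Fintype K] [Field L] [Algebra K L] [Finite L]

theorem sub_le_rankWeight_vecMul_kronecker_moore {l m : Type*} [Fintype l] {n k : ℕ}
    {g : Fin n → L} (hg : Submodule.span K (Set.range g) = ⊤) (A : Matrix l m L)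
    (x : l × Fin k → L) (hc : x ᵥ* (A ⊗ₖ moore (Fintype.card K) g k) ≠ 0) :
    Module.finrank K L - (k - 1) ≤ rankWeight K (x ᵥ* (A ⊗ₖ moore (Fintype.card K) g k)) := by
  obtain ⟨⟨j₁, j₂⟩, hj⟩ := Function.ne_iff.mp hc
  set y : Fin k → L := fun i₂ => ((fun i₁ => x (i₁, i₂)) ᵥ* A) j₁
  have hrow : (x ᵥ* (A ⊗ₖ moore (Fintype.card K) g k)) ∘ Prod.mk j₁ =
      y ᵥ* moore (Fintype.card K) g k :=
    funext fun j => vecMul_kronecker_apply x A _ j₁ j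
  have hy : y ≠ 0 := fun hy => hj (by simpa [hy] using congr_fun hrow j₂)
  calc Module.finrank K L - (k - 1) ≤ rankWeight K (y ᵥ* moore (Fintype.card K) g k) :=
        sub_le_rankWeight_vecMul_moore hg hy
    _ ≤ _ := hrow ▸ rankWeight_comp_le K _ _

theorem exists_rankWeight_vecMul_kronecker_moore_eq {n₁ n₂ k₂ : ℕ} {g₁ : Fin n₁ → L}
    (hg₁ : rankWeight K g₁ = n₁) (hn₁ : 0 < n₁) {g₂ : Fin n₂ → L} (hli₂ : LinearIndependent K g₂)
    (hg₂ : Submodule.span K (Set.range g₂) = ⊤) (hk₂ : 1 ≤ k₂) (hkn₂ : k₂ ≤ n₂) :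
    ∃ x : Fin n₁ × Fin k₂ → L,
      rankWeight K (x ᵥ* (moore (Fintype.card K) g₁ n₁ ⊗ₖ moore (Fintype.card K) g₂ k₂)) =
        Module.finrank K L - (k₂ - 1) := by
  obtain ⟨b, hb⟩ := exists_rankWeight_vecMul_moore_eq hli₂ hg₂ hk₂ hkn₂
  obtain ⟨a, ha : a ᵥ* _ = _⟩ :=
    vecMul_surjective_iff_isUnit.mpr (isUnit_moore hg₁.ge) (Pi.single ⟨0, hn₁⟩ 1)
  exact ⟨fun i => a i.1 * b i.2, by rw [vecMul_kronecker_mul, ha, rankWeight_single_mul, hb]⟩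

end KroneckerMoore

theorem gk_min_rank_distance_case1_general
    (q m n1 k1 n2 k2 : ℕ)
    (K L : Type*) [Field K] [Fintype K] [Field L] [Algebra K L]
    (hq : Fintype.card K = q) (hm : Module.finrank K L = m)
    (hk2pos : 1 ≤ k2) (hk2n2 : k2 ≤ n2) (hn2m : n2 = m)
    (hn1 : 2 ≤ n1) (hk1 : k1 = n1)
    (g1 : Fin n1 → L) (hg1 : rankWeight K g1 = n1)
    (g2 : Fin n2 → L) (hg2 : rankWeight K g2 = n2) :
    (∀ c : Fin n1 × Fin n2 → L,
      (∃ x : Fin k1 × Fin k2 → L, c = x ᵥ* (moore q g1 k1 ⊗ₖ moore q g2 k2)) →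
      c ≠ 0 → n2 - k2 + 1 ≤ rankWeight K c) ∧
    ∃ c : Fin n1 × Fin n2 → L,
      (∃ x : Fin k1 × Fin k2 → L, c = x ᵥ* (moore q g1 k1 ⊗ₖ moore q g2 k2)) ∧
      c ≠ 0 ∧ rankWeight K c = n2 - k2 + 1 := by
  subst hq hn2m hk1
  have : FiniteDimensional K L := .of_finrank_pos (by omega)
  have : Finite L := Module.finite_of_finite K
  have hli₂ := linearIndependent_of_rankWeight_eq K hg2
  have hspan₂ : Submodule.span K (Set.range g2) = ⊤ :=
    Submodule.eq_top_of_finrank_eq (hg2.trans hm.symm)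
  rw [show n2 - k2 + 1 = Module.finrank K L - (k2 - 1) by omega]
  refine ⟨fun c ⟨x, hx⟩ hc => ?_, ?_⟩
  · subst hx
    exact sub_le_rankWeight_vecMul_kronecker_moore hspan₂ _ x hc
  · obtain ⟨x, hx⟩ :=
      exists_rankWeight_vecMul_kronecker_moore_eq hg1 (by omega) hli₂ hspan₂ hk2pos hk2n2
    refine ⟨_, ⟨x, rfl⟩, fun h => ?_, hx⟩
    rw [h, rankWeight_zero] at hx
    omega

theorem gk_min_rank_distance_case1
    (q m n1 k1 n2 k2 : ℕ)
    (K L : Type*) [Field K] [Fintype K] [Field L] [Algebra K L]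
    (hq : Fintype.card K = q) (hm : Module.finrank K L = m)
    (hk2pos : 1 ≤ k2) (hk2n2 : k2 ≤ n2) (hn2m : n2 = m)
    (hn1 : 2 ≤ n1) (hn1m : n1 ≤ m) (hk1 : k1 = n1)
    (g1 : Fin n1 → L) (hg1 : rankWeight K g1 = n1)
    (g2 : Fin n2 → L) (hg2 : rankWeight K g2 = n2) :
    (∀ c : Fin n1 × Fin n2 → L,
      (∃ x : Fin k1 × Fin k2 → L, c = x ᵥ* (moore q g1 k1 ⊗ₖ moore q g2 k2)) →
      c ≠ 0 → n2 - k2 + 1 ≤ rankWeight K c) ∧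
    ∃ c : Fin n1 × Fin n2 → L,
      (∃ x : Fin k1 × Fin k2 → L, c = x ᵥ* (moore q g1 k1 ⊗ₖ moore q g2 k2)) ∧
      c ≠ 0 ∧ rankWeight K c = n2 - k2 + 1 :=
  gk_min_rank_distance_case1_general q m n1 k1 n2 k2 K L hq hm hk2pos hk2n2 hn2m hn1 hk1 g1 hg1 g2
    hg2
end

section
/- Let v ∈ L^n with wt_R(v) = t and 1 ≤ t ≤ n. Then there exists an invertible n×n matrix P with entries in the base field K (viewed in L via the inclusion K ⊆ L) such that the vector w = v·P satisfies: w_j = 0 for every index j > t, and the first t entries of w are linearly independent over K (so the truncation of w to its first t entries has rank weight t). -/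
/-!
A change of basis `P` over `K` replaces `v` by the vector of values `φ (b j)` of the `K`-linear map
`φ : Kⁿ → L, x ↦ ∑ xᵢ vᵢ` on the basis `b` of `Kⁿ` formed by the columns of `P`. The image of `φ`
is the support of `v`, of dimension `t`, so it suffices to take for `b` a basis of a complement of
`ker φ` (on which `φ` is injective), followed by a basis of `ker φ`.
-/

open Matrix

open Module

theorem LinearMap.exists_basis_sum_ker {K V M : Type*} [Field K] [AddCommGroup V] [Module K V]
    [FiniteDimensional K V] [AddCommGroup M] [Module K M] (φ : V →ₗ[K] M) :
    ∃ b : Basis (Fin (finrank K (range φ)) ⊕ Fin (finrank K (ker φ))) K V,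
      (∀ i, φ (b (.inr i)) = 0) ∧ LinearIndependent K (fun i => φ (b (.inl i))) := by
  obtain ⟨W, hW⟩ := (ker φ).exists_isCompl
  have hW_range : finrank K W = finrank K (range φ) :=
    ((Submodule.quotientEquivOfIsCompl _ W hW).symm.trans φ.quotKerEquivRange).finrank_eq
  let bW := finBasisOfFinrankEq K W hW_range
  let b := (bW.prod (finBasis K (ker φ))).map (Submodule.prodEquivOfIsCompl W (ker φ) hW.symm)
  have hb_inl : ∀ i, b (.inl i) = bW i := fun i => by simp [b, Basis.prod_apply]
  have hb_inr : ∀ i, b (.inr i) = finBasis K (ker φ) i := fun i => by simp [b, Basis.prod_apply]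
  refine ⟨b, fun i => by rw [hb_inr]; exact (finBasis K (ker φ) i).2, ?_⟩
  have hdisj : Disjoint (Submodule.span K (Set.range fun i => (bW i : V))) (ker φ) := by
    refine hW.symm.disjoint.mono_left (Submodule.span_le.2 ?_)
    rintro _ ⟨i, rfl⟩
    exact (bW i).2
  simp only [hb_inl]
  exact (bW.linearIndependent.map' W.subtype W.ker_subtype).map hdisj

theorem LinearMap.exists_basis_fin_ker {K V M : Type*} [Field K] [AddCommGroup V] [Module K V]
    [FiniteDimensional K V] [AddCommGroup M] [Module K M] (φ : V →ₗ[K] M) {n t : ℕ}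
    (hn : finrank K V = n) (ht : finrank K (range φ) = t) (htn : t ≤ n) :
    ∃ b : Basis (Fin n) K V, (∀ j : Fin n, t ≤ (j : ℕ) → φ (b j) = 0) ∧
      LinearIndependent K (fun i : Fin t => φ (b (Fin.castLE htn i))) := by
  subst hn ht
  obtain ⟨b, hker, hli⟩ := φ.exists_basis_sum_ker
  have hrank := φ.finrank_range_add_finrank_ker
  let e := finSumFinEquiv.trans (finCongr hrank)
  refine ⟨b.reindex e, fun j hj => ?_, ?_⟩
  · have hj' : e (.inr ⟨j - finrank K (range φ), by omega⟩) = j := Fin.ext (by simp [e]; omega)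
    rw [← hj', Basis.reindex_apply, Equiv.symm_apply_apply]
    exact hker _
  · have he : ∀ i, e (.inl i) = Fin.castLE htn i := fun i => Fin.ext (by simp [e])
    simpa only [← he, Basis.reindex_apply, Equiv.symm_apply_apply] using hli

theorem Matrix.vecMul_map_algebraMap_apply {K L ι κ : Type*} [CommSemiring K] [CommSemiring L]
    [Algebra K L] [Fintype ι] (v : ι → L) (P : Matrix ι κ K) (j : κ) :
    (v ᵥ* P.map (algebraMap K L)) j = Fintype.linearCombination K v (fun i => P i j) := by
  simp only [vecMul, dotProduct, map_apply, Fintype.linearCombination_apply, Algebra.smul_def]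
  exact Finset.sum_congr rfl fun i _ => mul_comm _ _

theorem exists_baseField_change_support_normal_form_general
    (n t : ℕ)
    (K L : Type*) [Field K] [Field L] [Algebra K L]
    (htn : t ≤ n)
    (v : Fin n → L) (hv : rankWeight K v = t) :
    ∃ P : Matrix (Fin n) (Fin n) K, IsUnit P ∧
      (∀ j : Fin n, t ≤ (j : ℕ) → (v ᵥ* P.map (algebraMap K L)) j = 0) ∧
      LinearIndependent K
        (fun i : Fin t => (v ᵥ* P.map (algebraMap K L)) (Fin.castLE htn i)) := by
  obtain ⟨b, hker, hli⟩ := (Fintype.linearCombination K v).exists_basis_fin_ker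
    (finrank_fin_fun K) (by rwa [Fintype.range_linearCombination]) htn
  let P := (Pi.basisFun K (Fin n)).toMatrix b
  have hP (j : Fin n) : (v ᵥ* P.map (algebraMap K L)) j = Fintype.linearCombination K v (b j) :=
    vecMul_map_algebraMap_apply v P j
  have := (Pi.basisFun K (Fin n)).invertibleToMatrix b
  refine ⟨P, isUnit_of_invertible P, fun j hj => by rw [hP]; exact hker j hj, ?_⟩
  simpa only [hP] using hli

theorem exists_baseField_change_support_normal_form
    (q m n t : ℕ)
    (K L : Type*) [Field K] [Fintype K] [Field L] [Algebra K L]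
    (hq : Fintype.card K = q) (hm : Module.finrank K L = m)
    (htpos : 1 ≤ t) (htn : t ≤ n)
    (v : Fin n → L) (hv : rankWeight K v = t) :
    ∃ P : Matrix (Fin n) (Fin n) K, IsUnit P ∧
      (∀ j : Fin n, t ≤ (j : ℕ) → (v ᵥ* P.map (algebraMap K L)) j = 0) ∧
      LinearIndependent K
        (fun i : Fin t => (v ᵥ* P.map (algebraMap K L)) (Fin.castLE htn i)) :=
  exists_baseField_change_support_normal_form_general n t K L htn v hv
end

section
/- Let N(X) be a monic polynomial of degree n with coefficients in the base field K, and let u, v ∈ L^n. Then the ideal product u·v (the coefficient vector of u(X)·v(X) mod N(X)) satisfies wt_R(u·v) ≤ wt_R(u)·wt_R(v). (Because N has coefficients in K, the support of u·v is contained in the K-span of the pairwise products of elements of Supp(u) and Supp(v).) -/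
/-!
Since `N` has coefficients in `K`, reducing `X ^ k` modulo `N` only produces `K`-linear
combinations of powers of `X`. Hence every coefficient of `u(X) v(X) mod N(X)` is a
`K`-linear combination of products `u_j v_k`, i.e. lies in `Supp(u) * Supp(v)`, and the
`K`-dimension of a product of subspaces is at most the product of their dimensions, as it
is the image of their tensor product under multiplication.
-/

open Polynomial

/-- The ideal product of two vectors of length `n` modulo a polynomial `N` over the
base field: the coefficient vector of `u(X) * v(X) mod N(X)`. -/
noncomputable def idealProd {K L : Type*} [Field K] [Field L] [Algebra K L] {n : ℕ}
    (N : Polynomial K) (u v : Fin n → L) : Fin n → L :=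
  fun i =>
    (((∑ j : Fin n, Polynomial.C (u j) * Polynomial.X ^ (j : ℕ)) *
        (∑ j : Fin n, Polynomial.C (v j) * Polynomial.X ^ (j : ℕ))) %ₘ
      (N.map (algebraMap K L))).coeff (i : ℕ)

namespace Submodule

variable {K A : Type*} [Field K] [Ring A] [Algebra K A] (M N : Submodule K A)

instance finite_mul [Module.Finite K M] [Module.Finite K N] : Module.Finite K ↥(M * N) :=
  Module.Finite.iff_fg.mpr ((Module.Finite.iff_fg.mp ‹_›).mul (Module.Finite.iff_fg.mp ‹_›))

theorem finrank_mul_le [Module.Finite K M] [Module.Finite K N] :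
    Module.finrank K ↥(M * N) ≤ Module.finrank K M * Module.finrank K N := by
  rw [← mulMap_range, ← Module.finrank_tensorProduct]
  exact LinearMap.finrank_range_le _

end Submodule

namespace Polynomial

theorem coeff_sum_C_mul_X_pow_mem_span {K A : Type*} [CommSemiring K] [Semiring A]
    [Module K A] {n : ℕ} (u : Fin n → A) (i : ℕ) :
    (∑ j : Fin n, C (u j) * X ^ (j : ℕ)).coeff i ∈ Submodule.span K (Set.range u) := by
  rw [finsetSum_coeff]
  refine Submodule.sum_mem _ fun j _ => ?_
  rw [coeff_C_mul_X_pow]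
  split_ifs
  · exact Submodule.subset_span ⟨j, rfl⟩
  · exact zero_mem _

theorem coeff_mul_mem_mul {K A : Type*} [CommSemiring K] [Semiring A] [Algebra K A]
    {U V : Submodule K A} {p q : A[X]} (hp : ∀ i, p.coeff i ∈ U) (hq : ∀ i, q.coeff i ∈ V)
    (i : ℕ) : (p * q).coeff i ∈ U * V := by
  rw [coeff_mul]
  exact Submodule.sum_mem _ fun x _ => Submodule.mul_mem_mul (hp x.1) (hq x.2)

theorem coeff_modByMonic_map_mem {K A : Type*} [CommRing K] [CommRing A] [Algebra K A]
    {W : Submodule K A} {N : K[X]} (hN : N.Monic) {p : A[X]} (hp : ∀ i, p.coeff i ∈ W)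
    (i : ℕ) : (p %ₘ N.map (algebraMap K A)).coeff i ∈ W := by
  have hX (k : ℕ) :
      (X : A[X]) ^ k %ₘ N.map (algebraMap K A) = (X ^ k %ₘ N).map (algebraMap K A) := by
    rw [map_modByMonic _ hN, Polynomial.map_pow, map_X]
  have hsum : p %ₘ N.map (algebraMap K A)
      = ∑ k ∈ p.support, C (p.coeff k) * (X ^ k %ₘ N).map (algebraMap K A) := by
    conv_lhs => rw [as_sum_support_C_mul_X_pow p]
    simp only [← modByMonicHom_apply, map_sum, ← smul_eq_C_mul, map_smul]
    simp only [modByMonicHom_apply, hX]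
  rw [hsum, finsetSum_coeff]
  refine Submodule.sum_mem _ fun k _ => ?_
  rw [coeff_C_mul, coeff_map, mul_comm, ← Algebra.smul_def]
  exact W.smul_mem _ (hp k)

end Polynomial

theorem rankWeight_idealProd_le_general
    (n : ℕ)
    (K L : Type*) [Field K] [Field L] [Algebra K L]
    (N : Polynomial K) (hN : N.Monic)
    (u v : Fin n → L) :
    rankWeight K (idealProd N u v) ≤ rankWeight K u * rankWeight K v := by
  set U := Submodule.span K (Set.range u)
  set V := Submodule.span K (Set.range v)
  have : FiniteDimensional K U := FiniteDimensional.span_of_finite K (Set.finite_range u)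
  have : FiniteDimensional K V := FiniteDimensional.span_of_finite K (Set.finite_range v)
  have hcoeff (i : Fin n) : idealProd N u v i ∈ U * V :=
    coeff_modByMonic_map_mem hN (coeff_mul_mem_mul (coeff_sum_C_mul_X_pow_mem_span u)
      (coeff_sum_C_mul_X_pow_mem_span v)) i
  calc rankWeight K (idealProd N u v) ≤ Module.finrank K ↥(U * V) :=
        Submodule.finrank_mono (Submodule.span_le.mpr (Set.range_subset_iff.mpr hcoeff))
    _ ≤ rankWeight K u * rankWeight K v := Submodule.finrank_mul_le U V

theorem rankWeight_idealProd_le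
    (q m n : ℕ)
    (K L : Type*) [Field K] [Fintype K] [Field L] [Algebra K L]
    (hq : Fintype.card K = q) (hm : Module.finrank K L = m)
    (N : Polynomial K) (hN : N.Monic) (hNdeg : N.natDegree = n)
    (u v : Fin n → L) :
    rankWeight K (idealProd N u v) ≤ rankWeight K u * rankWeight K v :=
  rankWeight_idealProd_le_general n K L N hN u v
end

section
/- Let N(X) be a monic polynomial of degree n with coefficients in the base field K, and let x, y, r1, r2, e ∈ L^n with wt_R(x) ≤ ω_x, wt_R(y) ≤ ω_y, wt_R(r1) ≤ ω_1, wt_R(r2) ≤ ω_2, and wt_R(e) ≤ ω_e. Then wt_R(x·r2 − y·r1 + e) ≤ ω_x·ω_2 + ω_y·ω_1 + ω_e, where · denotes the ideal product modulo N(X) and addition/subtraction are coordinatewise. (This is the weight bound on the effective error in the decryption of the RQC.EGK-BWE cryptosystem, which guarantees its zero decryption failure probability when this bound is within the decoding capability of the public code.) -/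
open Polynomial

/-- A finite-dimensional submodule of `L` is the span of the range of (the coercion of)
a finite basis. -/
lemma aux_span_finBasis {K L : Type*} [Field K] [Field L] [Algebra K L]
    (A : Submodule K L) [FiniteDimensional K A] :
    ∃ (d : ℕ) (f : Fin d → L), d = Module.finrank K A ∧
      A = Submodule.span K (Set.range f) := by
  refine ⟨Module.finrank K A, fun i => ((Module.finBasis K A) i : L), rfl, ?_⟩
  conv_lhs => rw [← Submodule.range_subtype A, ← Submodule.map_top,
    ← (Module.finBasis K A).span_eq, Submodule.map_span]
  rw [← Set.range_comp]
  rfl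

/-- The product of two finite-dimensional submodules of `L` is finite-dimensional,
with dimension at most the product of the dimensions. -/
lemma aux_finrank_mul_le {K L : Type*} [Field K] [Field L] [Algebra K L]
    (A B : Submodule K L) [FiniteDimensional K A] [FiniteDimensional K B] :
    FiniteDimensional K ↥(A * B) ∧
      Module.finrank K ↥(A * B) ≤ Module.finrank K A * Module.finrank K B := by
  classical
  obtain ⟨d1, f, hd1, hf⟩ := aux_span_finBasis A
  obtain ⟨d2, g, hd2, hg⟩ := aux_span_finBasis B
  have hAB : A * B = Submodule.span K (Set.range fun p : Fin d1 × Fin d2 =>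
      f p.1 * g p.2) := by
    rw [hf, hg, Submodule.span_mul_span, ← Set.image2_mul, Set.image2_range]
  constructor
  · rw [hAB]
    exact FiniteDimensional.span_of_finite K (Set.finite_range _)
  · rw [hAB, ← hd1, ← hd2]
    have := finrank_range_le_card (R := K) (fun p : Fin d1 × Fin d2 => f p.1 * g p.2)
    simpa [Set.finrank] using this

/-- Each coordinate of the ideal product lies in the product of the spans. -/
lemma aux_idealProd_mem {K L : Type*} [Field K] [Field L] [Algebra K L] {n : ℕ}
    (N : Polynomial K) (hN : N.Monic) (u v : Fin n → L) (i : Fin n) :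
    idealProd N u v i ∈
      Submodule.span K (Set.range u) * Submodule.span K (Set.range v) := by
  classical
  set Nm := N.map (algebraMap K L) with hNm
  have hprod : (∑ j : Fin n, C (u j) * X ^ (j : ℕ)) * (∑ j : Fin n, C (v j) * X ^ (j : ℕ))
      = ∑ j : Fin n, ∑ k : Fin n, (u j * v k) • ((X : L[X]) ^ ((j : ℕ) + (k : ℕ))) := by
    rw [Finset.sum_mul_sum]
    refine Finset.sum_congr rfl fun j _ => Finset.sum_congr rfl fun k _ => ?_
    rw [smul_eq_C_mul, C_mul, pow_add]; ring
  have hmod : ∀ p : L[X], p %ₘ Nm = Polynomial.modByMonicHom Nm p := fun p => rfl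
  unfold idealProd
  rw [← hNm, hprod, hmod, map_sum]
  simp only [map_sum, LinearMap.map_smul, Polynomial.modByMonicHom_apply]
  rw [Polynomial.finset_sum_coeff]
  refine Submodule.sum_mem _ fun j _ => ?_
  rw [Polynomial.finset_sum_coeff]
  refine Submodule.sum_mem _ fun k _ => ?_
  have hX : ((X : L[X]) ^ ((j : ℕ) + (k : ℕ))) %ₘ Nm
      = (((X : Polynomial K) ^ ((j : ℕ) + (k : ℕ))) %ₘ N).map (algebraMap K L) := by
    rw [Polynomial.map_modByMonic _ hN, Polynomial.map_pow, Polynomial.map_X]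
  rw [Polynomial.coeff_smul, smul_eq_mul, hX, Polynomial.coeff_map,
    mul_comm (u j * v k), ← Algebra.smul_def]
  exact Submodule.smul_mem _ _
    (Submodule.mul_mem_mul (Submodule.subset_span ⟨j, rfl⟩) (Submodule.subset_span ⟨k, rfl⟩))

theorem rqc_effective_error_weight_bound
    (q m n ωx ωy ω1 ω2 ωe : ℕ)
    (K L : Type*) [Field K] [Fintype K] [Field L] [Algebra K L]
    (hq : Fintype.card K = q) (hm : Module.finrank K L = m)
    (N : Polynomial K) (hN : N.Monic) (hNdeg : N.natDegree = n)
    (x y r1 r2 e : Fin n → L)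
    (hx : rankWeight K x ≤ ωx) (hy : rankWeight K y ≤ ωy)
    (hr1 : rankWeight K r1 ≤ ω1) (hr2 : rankWeight K r2 ≤ ω2)
    (he : rankWeight K e ≤ ωe) :
    rankWeight K (idealProd N x r2 - idealProd N y r1 + e) ≤
      ωx * ω2 + ωy * ω1 + ωe := by
  classical
  haveI fdx : FiniteDimensional K (Submodule.span K (Set.range x)) :=
    FiniteDimensional.span_of_finite K (Set.finite_range x)
  haveI fdy : FiniteDimensional K (Submodule.span K (Set.range y)) :=
    FiniteDimensional.span_of_finite K (Set.finite_range y)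
  haveI fdr1 : FiniteDimensional K (Submodule.span K (Set.range r1)) :=
    FiniteDimensional.span_of_finite K (Set.finite_range r1)
  haveI fdr2 : FiniteDimensional K (Submodule.span K (Set.range r2)) :=
    FiniteDimensional.span_of_finite K (Set.finite_range r2)
  haveI fde : FiniteDimensional K (Submodule.span K (Set.range e)) :=
    FiniteDimensional.span_of_finite K (Set.finite_range e)
  set A := Submodule.span K (Set.range x) * Submodule.span K (Set.range r2) with hA
  set B := Submodule.span K (Set.range y) * Submodule.span K (Set.range r1) with hB
  set Cs := Submodule.span K (Set.range e) with hC
  obtain ⟨fdA, hAle⟩ := aux_finrank_mul_le (Submodule.span K (Set.range x))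
    (Submodule.span K (Set.range r2))
  obtain ⟨fdB, hBle⟩ := aux_finrank_mul_le (Submodule.span K (Set.range y))
    (Submodule.span K (Set.range r1))
  haveI := fdA; haveI := fdB
  have hmem : ∀ i, (idealProd N x r2 - idealProd N y r1 + e) i ∈ A ⊔ B ⊔ Cs := fun i => by
    have h1 := aux_idealProd_mem N hN x r2 i
    have h2 := aux_idealProd_mem N hN y r1 i
    have h3 : e i ∈ Cs := Submodule.subset_span ⟨i, rfl⟩
    exact Submodule.add_mem _
      (Submodule.sub_mem _ (Submodule.mem_sup_left (Submodule.mem_sup_left h1))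
        (Submodule.mem_sup_left (Submodule.mem_sup_right h2)))
      (Submodule.mem_sup_right h3)
  have hspan : Submodule.span K (Set.range (idealProd N x r2 - idealProd N y r1 + e))
      ≤ A ⊔ B ⊔ Cs :=
    Submodule.span_le.mpr (Set.range_subset_iff.mpr hmem)
  calc rankWeight K (idealProd N x r2 - idealProd N y r1 + e)
      ≤ Module.finrank K ↥(A ⊔ B ⊔ Cs) := Submodule.finrank_mono hspan
    _ ≤ Module.finrank K ↥(A ⊔ B) + Module.finrank K ↥Cs :=
        Submodule.finrank_add_le_finrank_add_finrank _ _
    _ ≤ (Module.finrank K ↥A + Module.finrank K ↥B) + Module.finrank K ↥Cs :=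
        Nat.add_le_add_right (Submodule.finrank_add_le_finrank_add_finrank _ _) _
    _ ≤ ωx * ω2 + ωy * ω1 + ωe := by
        refine Nat.add_le_add (Nat.add_le_add ?_ ?_) he
        · exact hAle.trans (Nat.mul_le_mul hx hr2)
        · exact hBle.trans (Nat.mul_le_mul hy hr1)
end

section
/- (Singleton-style bound for the rank metric.) Let C be a nonzero L-linear subspace of L^n, let k = dim_L C, and let d ≥ 1 be such that every nonzero c ∈ C satisfies wt_R(c) ≥ d. Then: if n ≤ m, one has k ≤ n − d + 1; and if n > m, one has k·m ≤ (m − d + 1)·n. -/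
lemma rankWeight_le_card (K : Type*) {L : Type*} [Field K] [Field L] [Algebra K L]
    {t : ℕ} (v : Fin t → L) : rankWeight K v ≤ t := by
  classical
  refine (finrank_span_le_card (Set.range v)).trans ?_
  rw [Set.toFinset_card]
  simpa using Fintype.card_range_le v

theorem singleton_bound_rank_metric
    (q m n k d : ℕ)
    (K L : Type*) [Field K] [Fintype K] [Field L] [Algebra K L]
    (hq : Fintype.card K = q) (hm : Module.finrank K L = m)
    (C : Submodule L (Fin n → L)) (hC : C ≠ ⊥)
    (hk : Module.finrank L C = k) (hd : 1 ≤ d)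
    (hdist : ∀ c ∈ C, c ≠ 0 → d ≤ rankWeight K c) :
    (n ≤ m → k ≤ n - d + 1) ∧ (m < n → k * m ≤ (m - d + 1) * n) := by
  classical
  obtain ⟨c₀, hc₀C, hc₀⟩ := C.ne_bot_iff.mp hC
  have hdn : d ≤ n := (hdist c₀ hc₀C hc₀).trans (rankWeight_le_card K c₀)
  have hd1n : d - 1 ≤ n := le_trans (Nat.sub_le d 1) hdn
  constructor
  · -- puncturing argument (valid regardless of n ≤ m)
    intro _
    let φ : (Fin n → L) →ₗ[L] (Fin (n - (d - 1)) → L) :=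
      { toFun := fun c i => c ⟨d - 1 + i.1, by omega⟩
        map_add' := fun _ _ => rfl
        map_smul' := fun _ _ => rfl }
    have hinj : Function.Injective (φ.comp C.subtype) := by
      rw [← LinearMap.ker_eq_bot, Submodule.eq_bot_iff]
      rintro ⟨c, hcC⟩ hc
      rw [LinearMap.mem_ker] at hc
      have hzero : ∀ j : Fin n, d - 1 ≤ j.1 → c j = 0 := by
        intro j hj
        have := congrFun hc ⟨j.1 - (d - 1), by omega⟩
        simpa [φ, Fin.ext_iff, show d - 1 + (j.1 - (d - 1)) = j.1 by omega] using this
      have hle : rankWeight K c ≤ d - 1 := by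
        have hsub : Set.range c ⊆
            ↑(Submodule.span K (Set.range fun i : Fin (d - 1) => c (Fin.castLE hd1n i))) := by
          rintro x ⟨j, rfl⟩
          by_cases hj : j.1 < d - 1
          · exact Submodule.subset_span ⟨⟨j.1, hj⟩, by congr 1⟩
          · rw [hzero j (by omega)]; exact (Submodule.span K _).zero_mem
        haveI := FiniteDimensional.span_of_finite K
          (Set.finite_range fun i : Fin (d - 1) => c (Fin.castLE hd1n i))
        refine (Submodule.finrank_mono (Submodule.span_le.mpr hsub)).trans ?_
        exact rankWeight_le_card K _
      by_contra hne
      have : c ≠ 0 := by simpa [Submodule.mk_eq_zero] using hne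
      have := hdist c hcC this
      omega
    have := LinearMap.finrank_le_finrank_of_injective hinj
    rw [hk, Module.finrank_pi] at this
    simp only [Fintype.card_fin] at this
    omega
  · intro hmn
    rcases Nat.eq_zero_or_pos m with hm0 | hmpos
    · simp [hm0]
    haveI : Module.Finite K L := Module.finite_of_finrank_pos (hm ▸ hmpos)
    have hdm : d ≤ m := by
      have := (hdist c₀ hc₀C hc₀).trans ((Submodule.span K (Set.range c₀)).finrank_le)
      omega
    have hd1m : d - 1 ≤ Module.finrank K L := by omega
    let b := Module.finBasis K L
    set W : Submodule K L :=
      Submodule.span K (Set.range fun i : Fin (d - 1) => b (Fin.castLE hd1m i)) with hW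
    have hWrank : Module.finrank K W = d - 1 := by
      rw [hW, show (Set.range fun i : Fin (d-1) => b (Fin.castLE hd1m i))
          = Set.range (⇑b ∘ Fin.castLE hd1m) from rfl, finrank_span_eq_card
        (b.linearIndependent.comp (Fin.castLE hd1m) (Fin.castLE_injective hd1m))]
      simp
    have hQrank : Module.finrank K (L ⧸ W) = m - (d - 1) := by
      have := W.finrank_quotient_add_finrank
      omega
    let ψ : C →ₗ[K] (Fin n → L ⧸ W) :=
      { toFun := fun c i => Submodule.Quotient.mk (c.1 i)
        map_add' := fun x y => by ext i; simp
        map_smul' := fun r x => by ext i; simp }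
    have hinj : Function.Injective ψ := by
      rw [← LinearMap.ker_eq_bot, Submodule.eq_bot_iff]
      rintro ⟨c, hcC⟩ hc
      rw [LinearMap.mem_ker] at hc
      have hmem : ∀ i, c i ∈ W := by
        intro i
        have := congrFun hc i
        simpa [ψ, Submodule.Quotient.mk_eq_zero] using this
      have hle : rankWeight K c ≤ d - 1 := by
        rw [← hWrank]
        exact Submodule.finrank_mono (Submodule.span_le.mpr (Set.range_subset_iff.mpr hmem))
      by_contra hne
      have : c ≠ 0 := by simpa [Submodule.mk_eq_zero] using hne
      have := hdist c hcC this
      omega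
    have hle := LinearMap.finrank_le_finrank_of_injective hinj
    rw [Module.finrank_pi_fintype] at hle
    simp only [hQrank, Finset.sum_const, Finset.card_univ, Fintype.card_fin, smul_eq_mul] at hle
    have htower : Module.finrank K L * Module.finrank L C = Module.finrank K C :=
      Module.finrank_mul_finrank K L C
    rw [hm, hk] at htower
    calc k * m = m * k := Nat.mul_comm k m
      _ = Module.finrank K C := htower
      _ ≤ n * (m - (d - 1)) := hle
      _ = (m - d + 1) * n := by rw [Nat.mul_comm]; congr 1; omega
end
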